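/- arXiv:2301.12554 — 4 statements merged into one kernel-verified Lean document; each statement's English description precedes it below -/
import Mathlib

section
/- Let g, h : ℝ^d → ℝ^c be two functions whose outputs are probability vectors (each component in [0,1], components summing to 1). Fix α ∈ [1/2, 1] and define the mixed classifier probabilities p_i(x) = (1-α)·g_i(x) + α·h_i(x). Let x ∈ ℝ^d, r ≥ 0, and y = argmax_i h_i(x). Suppose h is certifiably robust at x with margin (1-α)/α and radius r, i.e., for all i ≠ y and all δ with ‖δ‖_p ≤ r, h_y(x+δ) ≥ h_i(x+δ) + (1-α)/α. Then for all δ with ‖δ‖_p ≤ r and all i ≠ y, p_y(x+δ) ≥ p_i(x+δ); that is, the mixed classifier's prediction at x+δ equals y. -/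
/-- Margin-based certified robustness of the mixed classifier
`p_i(x) = (1-α)·g_i(x) + α·h_i(x)` (Lemma 3.3 in the paper). -/
theorem mixed_classifier_robust_of_margin
    (d c : ℕ) (g h : (Fin d → ℝ) → Fin c → ℝ)
    (nrm : (Fin d → ℝ) → ℝ)  -- the ℓ_p norm
    (hg01 : ∀ x i, g x i ∈ Set.Icc (0:ℝ) 1)
    (hgsum : ∀ x, ∑ i, g x i = 1)
    (hh01 : ∀ x i, h x i ∈ Set.Icc (0:ℝ) 1)
    (hhsum : ∀ x, ∑ i, h x i = 1)
    (α : ℝ) (hα : α ∈ Set.Icc (1/2 : ℝ) 1)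
    (x : Fin d → ℝ) (r : ℝ) (hr : 0 ≤ r)
    (y : Fin c) (hy : ∀ i, h x i ≤ h x y)
    (hrobust : ∀ i, i ≠ y → ∀ δ : Fin d → ℝ, nrm δ ≤ r →
      h (x + δ) y ≥ h (x + δ) i + (1 - α) / α) :
    ∀ δ : Fin d → ℝ, nrm δ ≤ r → ∀ i, i ≠ y →
      (1 - α) * g (x + δ) y + α * h (x + δ) y ≥
        (1 - α) * g (x + δ) i + α * h (x + δ) i := by
  intro δ hδ i hi
  have hαpos : (0:ℝ) < α := lt_of_lt_of_le (by norm_num) hα.1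
  have h1 := hrobust i hi δ hδ
  have hm : α * h (x + δ) y ≥ α * h (x + δ) i + (1 - α) := by
    have := mul_le_mul_of_nonneg_left h1 hαpos.le
    rw [mul_add, mul_div_cancel₀ _ hαpos.ne'] at this
    linarith
  have hgy := (hg01 (x + δ) y).1
  have hgi := (hg01 (x + δ) i).2
  nlinarith [hα.2]
end

section
/- Let g, h : ℝ^d → [0,1]^c with α ∈ [1/2, 1] and mixed probabilities p_i(x) = (1-α)·g_i(x) + α·h_i(x). Suppose each component h_i is ℓ_p-Lipschitz with constant L_i. Fix x ∈ ℝ^d with y = argmax_i h_i(x), and define r = min_{i ≠ y} [α(h_y(x) - h_i(x)) + α - 1] / [α(L_y + L_i)]. Then for every δ with ‖δ‖_p ≤ r, argmax_i p_i(x+δ) = y. -/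
/-! Moving from `x` to `x + δ` shrinks the margin `h_y - h_i` by at most `(L_y + L_i)‖δ‖`,
so within the radius `r` the weighted margin `α (h_y - h_i)` stays at least `1 - α`. That
is all the `g`-part can take back: `(1 - α)(g_i - g_y) ≤ 1 - α` because `g` is `[0, 1]`-valued. -/

lemma sub_sub_add_le_sub_of_abs_sub_le {a a' b b' ε η : ℝ}
    (ha : |a' - a| ≤ ε) (hb : |b' - b| ≤ η) : a - b - (ε + η) ≤ a' - b' := by
  linarith [(abs_le.1 ha).1, (abs_le.1 hb).2]

lemma convex_comb_le_convex_comb_of_margin {β u u' v v' : ℝ} (hβ : β ≤ 1)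
    (hu : u ≤ 1) (hu' : 0 ≤ u') (hmargin : 1 - β ≤ β * (v' - v)) :
    (1 - β) * u + β * v ≤ (1 - β) * u' + β * v' := by
  have hgap : (1 - β) * (u - u') ≤ 1 - β :=
    mul_le_of_le_one_right (by linarith) (by linarith)
  linarith

theorem mixed_classifier_lipschitz_certified_radius_general
    (d c : ℕ) (g h : (Fin d → ℝ) → Fin c → ℝ)
    (nrm : (Fin d → ℝ) → ℝ)  -- the ℓ_p norm
    (hg01 : ∀ x i, g x i ∈ Set.Icc (0:ℝ) 1)
    (α : ℝ) (hα : α ∈ Set.Icc (1/2 : ℝ) 1)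
    (L : Fin c → ℝ) (hLpos : ∀ i, 0 < L i)
    (hLip : ∀ i, ∀ x x' : Fin d → ℝ, |h x' i - h x i| ≤ L i * nrm (x' - x))
    (x : Fin d → ℝ) (y : Fin c)
    (r : ℝ)
    (hrmin : ∀ i, i ≠ y →
      r ≤ (α * (h x y - h x i) + α - 1) / (α * (L y + L i))) :
    ∀ δ : Fin d → ℝ, nrm δ ≤ r → ∀ i,
      (1 - α) * g (x + δ) i + α * h (x + δ) i ≤
        (1 - α) * g (x + δ) y + α * h (x + δ) y := by
  intro δ hδ i
  rcases eq_or_ne i y with rfl | hne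
  · exact le_rfl
  have hα0 : 0 < α := by linarith [hα.1]
  have hscale : 0 < α * (L y + L i) := by
    have := hLpos y; have := hLpos i; positivity
  have hradius : α * (L y + L i) * nrm δ ≤ α * (h x y - h x i) + α - 1 :=
    (le_div_iff₀' hscale).1 (hδ.trans (hrmin i hne))
  have hshift := sub_sub_add_le_sub_of_abs_sub_le (hLip y x (x + δ)) (hLip i x (x + δ))
  rw [add_sub_cancel_left] at hshift
  refine convex_comb_le_convex_comb_of_margin hα.2 (hg01 _ i).2 (hg01 _ y).1 ?_
  calc 1 - α ≤ α * (h x y - h x i - (L y * nrm δ + L i * nrm δ)) := by linarith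
    _ ≤ α * (h (x + δ) y - h (x + δ) i) := mul_le_mul_of_nonneg_left hshift hα0.le

/-- Lipschitz-based certified radius of the mixed classifier
(Theorem 3.6 in the paper). `r` is the minimum over `i ≠ y` of
`[α(h_y(x) - h_i(x)) + α - 1] / [α(L_y + L_i)]`, encoded by the lower bound
hypothesis `hrmin`. -/
theorem mixed_classifier_lipschitz_certified_radius
    (d c : ℕ) (g h : (Fin d → ℝ) → Fin c → ℝ)
    (nrm : (Fin d → ℝ) → ℝ)  -- the ℓ_p norm
    (hg01 : ∀ x i, g x i ∈ Set.Icc (0:ℝ) 1)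
    (hh01 : ∀ x i, h x i ∈ Set.Icc (0:ℝ) 1)
    (α : ℝ) (hα : α ∈ Set.Icc (1/2 : ℝ) 1)
    (L : Fin c → ℝ) (hLpos : ∀ i, 0 < L i)
    (hLip : ∀ i, ∀ x x' : Fin d → ℝ, |h x' i - h x i| ≤ L i * nrm (x' - x))
    (x : Fin d → ℝ) (y : Fin c) (hy : ∀ i, h x i ≤ h x y)
    (r : ℝ)
    (hrmin : ∀ i, i ≠ y →
      r ≤ (α * (h x y - h x i) + α - 1) / (α * (L y + L i))) :
    ∀ δ : Fin d → ℝ, nrm δ ≤ r → ∀ i,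
      (1 - α) * g (x + δ) i + α * h (x + δ) i ≤
        (1 - α) * g (x + δ) y + α * h (x + δ) y :=
  mixed_classifier_lipschitz_certified_radius_general d c g h nrm hg01 α hα L hLpos hLip x y r hrmin
end

section
/- Let h : ℝ^d → [0,1]^c have each component h_i ℓ_p-Lipschitz with constant L_i. Fix x with y = argmax_i h_i(x) and let μ ∈ [0,1]. Define r = min_{i ≠ y} (h_y(x) - h_i(x) - μ) / (L_y + L_i). Then h is certifiably robust at x with margin μ and radius r: for all i ≠ y and all δ with ‖δ‖_p ≤ r, h_y(x+δ) ≥ h_i(x+δ) + μ. -/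
/-- A classifier with ℓ_p-Lipschitz probability outputs is
certifiably robust with margin `μ` and radius
`r = min_{i ≠ y} (h_y(x) - h_i(x) - μ) / (L_y + L_i)` (encoded by `hrmin`). -/
theorem lipschitz_classifier_robust_with_margin
    (d c : ℕ) (h : (Fin d → ℝ) → Fin c → ℝ)
    (nrm : (Fin d → ℝ) → ℝ)  -- the ℓ_p norm
    (hh01 : ∀ x i, h x i ∈ Set.Icc (0:ℝ) 1)
    (L : Fin c → ℝ) (hLpos : ∀ i, 0 < L i)
    (hLip : ∀ i, ∀ x x' : Fin d → ℝ, |h x' i - h x i| ≤ L i * nrm (x' - x))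
    (x : Fin d → ℝ) (y : Fin c) (hy : ∀ i, h x i ≤ h x y)
    (μ : ℝ) (hμ : μ ∈ Set.Icc (0:ℝ) 1)
    (r : ℝ) (hr : 0 ≤ r)
    (hrmin : ∀ i, i ≠ y → r ≤ (h x y - h x i - μ) / (L y + L i)) :
    ∀ i, i ≠ y → ∀ δ : Fin d → ℝ, nrm δ ≤ r →
      h (x + δ) y ≥ h (x + δ) i + μ := by
  intro i hi δ hδ
  have hsum : 0 < L y + L i := by have := hLpos y; have := hLpos i; linarith
  have hmin := hrmin i hi
  have hkey : r * (L y + L i) ≤ h x y - h x i - μ := by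
    rw [div_eq_inv_mul] at hmin
    calc r * (L y + L i) ≤ ((L y + L i)⁻¹ * (h x y - h x i - μ)) * (L y + L i) := by
          apply mul_le_mul_of_nonneg_right hmin hsum.le
      _ = h x y - h x i - μ := by field_simp
  have h1 := (abs_le.mp (hLip y x (x + δ))).1
  have h2 := (abs_le.mp (hLip i x (x + δ))).2
  have hnd : (x + δ) - x = δ := by abel
  rw [hnd] at h1 h2
  have hy' : L y * nrm δ ≤ L y * r := mul_le_mul_of_nonneg_left hδ (hLpos y).le
  have hi' : L i * nrm δ ≤ L i * r := mul_le_mul_of_nonneg_left hδ (hLpos i).le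
  nlinarith
end

section
/- Fix α ∈ [1/2, 1] and suppose g_i(x) ∈ [0,1] for all i and x (no other assumptions on g). The certified radius in the mixed-classifier Lipschitz theorem is tight in the following sense: if at some perturbed point x+δ the robust classifier's margin fails, i.e., h_y(x+δ) - h_i(x+δ) < (1-α)/α for some i ≠ y, then there exists a choice of values g_y(x+δ), g_i(x+δ) ∈ [0,1] such that (1-α)·g_y(x+δ) + α·h_y(x+δ) < (1-α)·g_i(x+δ) + α·h_i(x+δ), so the mixed classifier can misclassify. -/
/-- Tightness of the certified radius.  If the robust
classifier's margin `(1-α)/α` fails at a perturbed point, there are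
admissible values in `[0,1]` for the standard classifier `g` that make the
mixed classifier misclassify. -/
theorem mixed_classifier_radius_tight
    (α : ℝ) (hα : α ∈ Set.Icc (1/2 : ℝ) 1)
    (hy hi : ℝ)  -- values h_y(x+δ) and h_i(x+δ) of the robust classifier
    (hhy : hy ∈ Set.Icc (0:ℝ) 1) (hhi : hi ∈ Set.Icc (0:ℝ) 1)
    (hmarginfail : hy - hi < (1 - α) / α) :
    ∃ gy gi : ℝ, gy ∈ Set.Icc (0:ℝ) 1 ∧ gi ∈ Set.Icc (0:ℝ) 1 ∧
      (1 - α) * gy + α * hy < (1 - α) * gi + α * hi := by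
  have hαpos : (0:ℝ) < α := lt_of_lt_of_le (by norm_num) hα.1
  refine ⟨0, 1, by norm_num, by norm_num, ?_⟩
  have h := (lt_div_iff₀ hαpos).mp hmarginfail
  nlinarith
end
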